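/- arXiv:2506.10405 — 3 statements merged into one kernel-verified Lean document; each statement's English description precedes it below -/
import Mathlib

section
/- Let ρ : Fin k → Fin n be an injective prefix of fixed jobs with range ρ ≠ Fin n, let g = gcd {p j : j ∉ range ρ}, and let q_g and q_1 be respectively the g-relaxation and the unit relaxation of (p, ρ). Then TEC*(q_g, id) ≥ TEC*(q_1, id). -/
namespace TOU

open Classical in
/-- The infimum of a set of rationals, as an element of `WithTop ℚ`:
the least element of the set when one exists, and `⊤` otherwise.
(All the sets of achievable total energy costs considered below are finite,
so this is the infimum, and it is `⊤` exactly when the set is empty.) -/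
noncomputable def infQ (A : Set ℚ) : WithTop ℚ :=
  if h : ∃ x ∈ A, ∀ y ∈ A, x ≤ y then ((h.choose : ℚ) : WithTop ℚ) else ⊤

open Classical in
/-- The analogous infimum operation for subsets of `WithTop ℚ`. -/
noncomputable def infW (A : Set (WithTop ℚ)) : WithTop ℚ :=
  if h : ∃ x ∈ A, ∀ y ∈ A, x ≤ y then h.choose else ⊤

variable {S : Type*}

/-- A state profile `Ω : Fin h → S × S` is valid if there are `m ≥ 2` states
`s 0, …, s m` with `s 0 = s 1 = off`, `s (m-1) = s m = off`, such that
`{0, …, h-1}` is the concatenation of consecutive blocks `I_1, …, I_m`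
(delimited by the cumulative endpoints `e 0 = 0 ≤ e 1 ≤ ⋯ ≤ e m = h`) where the
`k`-th block has size `T (s (k-1)) (s k)` (in particular this transition time is
not `∞`) and `Ω i = (s (k-1), s k)` for every `i` in the `k`-th block. -/
def ValidProfile (off : S) (T : S → S → ℕ∞) {h : ℕ} (Ω : Fin h → S × S) : Prop :=
  ∃ (m : ℕ) (s : ℕ → S) (e : ℕ → ℕ),
    2 ≤ m ∧ s 0 = off ∧ s 1 = off ∧ s (m - 1) = off ∧ s m = off ∧
    e 0 = 0 ∧ e m = h ∧
    ∀ k, 1 ≤ k → k ≤ m →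
      e (k - 1) ≤ e k ∧
      T (s (k - 1)) (s k) = ((e k - e (k - 1) : ℕ) : ℕ∞) ∧
      ∀ i : Fin h, e (k - 1) ≤ (i : ℕ) → (i : ℕ) < e k → Ω i = (s (k - 1), s k)

/-- A solution `(σ, Ω)` of the job list `p` is feasible if `Ω` is a valid state
profile, every processing window `[σ j, σ j + p j)` is contained in `{0, …, h-1}`,
the processing windows are pairwise disjoint, and `Ω i = (proc, proc)` for every
interval `i` lying in some processing window. -/
def Feasible (off proc : S) (T : S → S → ℕ∞) {h n : ℕ}
    (p : Fin n → ℕ) (σ : Fin n → ℕ) (Ω : Fin h → S × S) : Prop :=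
  ValidProfile off T Ω ∧
  (∀ j, σ j + p j ≤ h) ∧
  (∀ j j' : Fin n, j ≠ j' → ∀ i : ℕ,
    ¬(σ j ≤ i ∧ i < σ j + p j ∧ σ j' ≤ i ∧ i < σ j' + p j')) ∧
  (∀ j : Fin n, ∀ i : Fin h, σ j ≤ (i : ℕ) → (i : ℕ) < σ j + p j → Ω i = (proc, proc))

/-- The total energy cost of a solution: `TEC(σ, Ω) = Σ_{i<h} c i • P (Ω i)`. -/
def TEC (P : S → S → ℚ) {h : ℕ} (c : Fin h → ℚ) (Ω : Fin h → S × S) : ℚ :=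
  ∑ i, c i * P (Ω i).1 (Ω i).2

/-- A permutation `π` of `Fin n` orders `(σ, Ω)` if
`σ (π ℓ) + p (π ℓ) ≤ σ (π (ℓ+1))` for all `ℓ < n - 1`. -/
def Orders {n : ℕ} (p : Fin n → ℕ) (σ : Fin n → ℕ) (π : Equiv.Perm (Fin n)) : Prop :=
  ∀ (ℓ : ℕ) (h1 : ℓ + 1 < n),
    σ (π ⟨ℓ, by omega⟩) + p (π ⟨ℓ, by omega⟩) ≤ σ (π ⟨ℓ + 1, h1⟩)

/-- `TEC*(p, π)`: the optimal total energy cost over feasible solutions of `p`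
ordered by `π` (`⊤` if none exists). -/
noncomputable def TECopt (off proc : S) (T : S → S → ℕ∞) (P : S → S → ℚ)
    {h n : ℕ} (c : Fin h → ℚ) (p : Fin n → ℕ) (π : Equiv.Perm (Fin n)) : WithTop ℚ :=
  infQ {x : ℚ | ∃ (σ : Fin n → ℕ) (Ω : Fin h → S × S),
    Feasible off proc T p σ Ω ∧ Orders p σ π ∧ x = TEC P c Ω}

/-- The optimal total energy cost over all feasible solutions of `p`
(with no prescribed order of the jobs). -/
noncomputable def TECglobal (off proc : S) (T : S → S → ℕ∞) (P : S → S → ℚ)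
    {h n : ℕ} (c : Fin h → ℚ) (p : Fin n → ℕ) : WithTop ℚ :=
  infQ {x : ℚ | ∃ (σ : Fin n → ℕ) (Ω : Fin h → S × S),
    Feasible off proc T p σ Ω ∧ x = TEC P c Ω}

/-- The jobs not fixed by the prefix `ρ`, i.e. those outside the range of `ρ`. -/
def unfixed {n k : ℕ} (ρ : Fin k → Fin n) : Finset (Fin n) :=
  Finset.univ.filter fun j => ∀ ℓ, ρ ℓ ≠ j

/-- The number of jobs of the `d`-relaxation of `(p, ρ)`:
`k + (Σ_{j ∉ range ρ} p j) / d`. -/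
def relaxLen {n k : ℕ} (p : Fin n → ℕ) (ρ : Fin k → Fin n) (d : ℕ) : ℕ :=
  k + (∑ j ∈ unfixed ρ, p j) / d

/-- The `d`-relaxation of `(p, ρ)`: the fixed jobs `p (ρ 0), …, p (ρ (k-1))`
followed by `(Σ_{j ∉ range ρ} p j) / d` jobs of processing time `d`. -/
def relax {n k : ℕ} (p : Fin n → ℕ) (ρ : Fin k → Fin n) (d : ℕ) :
    Fin (relaxLen p ρ d) → ℕ :=
  fun ℓ => if hl : (ℓ : ℕ) < k then p (ρ ⟨ℓ, hl⟩) else d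

/-- The greatest common divisor of the processing times of the unfixed jobs. -/
def gcdUnfixed {n k : ℕ} (p : Fin n → ℕ) (ρ : Fin k → Fin n) : ℕ :=
  (unfixed ρ).gcd p

/-- The optimal switching cost `κ(s, a, s', b)`: the infimum over all chains
`s = u 0, u 1, …, u r = s'` with `T (u (t-1)) (u t) ≠ ∞` for every `t` and
`Σ_t T (u (t-1)) (u t) = b - a` of the total energy cost of the corresponding
consecutive blocks filling `{a, …, b-1}`. -/
noncomputable def kappa (T : S → S → ℕ∞) (P : S → S → ℚ) {h : ℕ} (c : Fin h → ℚ)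
    (s : S) (a : ℕ) (s' : S) (b : ℕ) : WithTop ℚ :=
  infQ {x : ℚ | ∃ (r : ℕ) (u : ℕ → S) (e : ℕ → ℕ),
    u 0 = s ∧ u r = s' ∧ e 0 = a ∧ e r = b ∧
    (∀ t, 1 ≤ t → t ≤ r → e (t - 1) ≤ e t ∧
      T (u (t - 1)) (u t) = ((e t - e (t - 1) : ℕ) : ℕ∞)) ∧
    x = ∑ t ∈ Finset.Icc 1 r, ∑ i ∈ Finset.Ico (e (t - 1)) (e t),
          (if hi : i < h then c ⟨i, hi⟩ else 0) * P (u (t - 1)) (u t)}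

/-- `d(s, s')`: the minimal total duration `Σ_t T (u (t-1)) (u t)` over chains
`s = u 0, …, u r = s'` with `r ≥ 1` and all transition times finite. -/
noncomputable def minDur (T : S → S → ℕ∞) (s s' : S) : ℕ∞ :=
  sInf {x : ℕ∞ | ∃ (r : ℕ) (u : ℕ → S), 1 ≤ r ∧ u 0 = s ∧ u r = s' ∧
    (∀ t, 1 ≤ t → t ≤ r → T (u (t - 1)) (u t) ≠ ⊤) ∧
    x = ∑ t ∈ Finset.Icc 1 r, T (u (t - 1)) (u t)}

/-- `(a, b)` (as half-open intervals `[a k, b k)`, `k : Fin K`) enumerates the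
maximal blocks of consecutive intervals `i` with `Ω i = (proc, proc)`:
every block is nonempty, consists of processing intervals only, every processing
interval lies in some block, and the (sorted) blocks are strictly separated. -/
def IsMaxProcBlocks (proc : S) {h : ℕ} (Ω : Fin h → S × S) {K : ℕ}
    (a b : Fin K → ℕ) : Prop :=
  (∀ k, a k < b k ∧ b k ≤ h) ∧
  (∀ k, ∀ i : Fin h, a k ≤ (i : ℕ) → (i : ℕ) < b k → Ω i = (proc, proc)) ∧
  (∀ i : Fin h, Ω i = (proc, proc) → ∃ k, a k ≤ (i : ℕ) ∧ (i : ℕ) < b k) ∧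
  (∀ k k' : Fin K, k < k' → b k < a k')

lemma infQ_mono {A B : Set ℚ} (hB : B.Finite) (hAB : A ⊆ B) : infQ B ≤ infQ A := by
  classical
  by_cases hA : ∃ x ∈ A, ∀ y ∈ A, x ≤ y
  · have hx0B : hA.choose ∈ B := hAB hA.choose_spec.1
    have hB' : ∃ x ∈ B, ∀ y ∈ B, x ≤ y :=
      Set.exists_min_image B id hB ⟨hA.choose, hx0B⟩
    have e1 : infQ A = ((hA.choose : ℚ) : WithTop ℚ) := dif_pos hA
    have e2 : infQ B = ((hB'.choose : ℚ) : WithTop ℚ) := dif_pos hB'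
    rw [e1, e2]
    exact_mod_cast hB'.choose_spec.2 hA.choose hx0B
  · have e1 : infQ A = ⊤ := dif_neg hA
    rw [e1]
    exact le_top

lemma succ_div_mod (t g : ℕ) (hg : 0 < g) :
    ((t + 1) % g = t % g + 1 ∧ (t + 1) / g = t / g) ∨
    (t % g + 1 = g ∧ (t + 1) % g = 0 ∧ (t + 1) / g = t / g + 1) := by
  have hdm := Nat.div_add_mod t g
  have hmlt : t % g < g := Nat.mod_lt _ hg
  by_cases hcase : t % g + 1 = g
  · right
    have he : t + 1 = g * (t / g + 1) := by rw [Nat.mul_add, Nat.mul_one]; omega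
    refine ⟨hcase, ?_, ?_⟩
    · rw [he]; exact Nat.mul_mod_right g _
    · rw [he]; exact Nat.mul_div_cancel_left _ hg
  · left
    have hlt : t % g + 1 < g := by omega
    have he : t + 1 = g * (t / g) + (t % g + 1) := by omega
    constructor
    · rw [he, Nat.mul_add_mod, Nat.mod_eq_of_lt hlt]
    · rw [he, Nat.mul_add_div hg, Nat.div_eq_of_lt hlt, Nat.add_zero]

/-- the gcd-relaxation bound dominates the unit-relaxation bound. -/
theorem gcd_relaxation_ge_unit_relaxation {S : Type*} [Fintype S] (off proc : S)
    (T : S → S → ℕ∞) (hT : ∀ s : S, T s s = 1)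
    (P : S → S → ℚ) {h : ℕ} (hh : 2 ≤ h) (c : Fin h → ℚ)
    {n : ℕ} (p : Fin n → ℕ) (hp : ∀ j, 1 ≤ p j)
    {k : ℕ} (ρ : Fin k → Fin n) (hρ : Function.Injective ρ)
    (hfull : Set.range ρ ≠ Set.univ) :
    TECopt off proc T P c (relax p ρ (gcdUnfixed p ρ)) (Equiv.refl _) ≥
      TECopt off proc T P c (relax p ρ 1) (Equiv.refl _) := by
  classical
  set g := gcdUnfixed p ρ with hgdef
  set M := ∑ j ∈ unfixed ρ, p j with hMdef
  obtain ⟨j0, hj0⟩ := Set.ne_univ_iff_exists_notMem _ |>.mp hfull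
  have hj0' : ∀ ℓ, ρ ℓ ≠ j0 := by
    intro ℓ hℓ; exact hj0 ⟨ℓ, hℓ⟩
  have hj0mem : j0 ∈ unfixed ρ := by simp [unfixed, hj0']
  have hg1 : 1 ≤ g := by
    rcases Nat.eq_zero_or_pos g with h0 | h1
    · exfalso
      rw [hgdef, gcdUnfixed, Finset.gcd_eq_zero_iff] at h0
      have := h0 j0 hj0mem
      have := hp j0; omega
    · exact h1
  have hM1 : 1 ≤ M :=
    le_trans (hp j0) (Finset.single_le_sum (f := p) (fun i _ => Nat.zero_le _) hj0mem)
  have hgM : g ∣ M := Finset.dvd_sum fun i hi => Finset.gcd_dvd hi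
  have hMg1 : 1 ≤ M / g := by
    rcases hgM with ⟨c, hc⟩
    rcases Nat.eq_zero_or_pos c with h0 | h1
    · rw [h0, Nat.mul_zero] at hc; omega
    · rw [hc, Nat.mul_div_cancel_left _ hg1]; exact h1
  have hK1 : relaxLen p ρ 1 = k + M := by simp [relaxLen, hMdef]
  have hKg : relaxLen p ρ g = k + M / g := rfl
  rw [TECopt, TECopt]
  apply infQ_mono
  · apply Set.Finite.subset (Set.finite_range (fun Ω : Fin h → S × S => TEC P c Ω))
    rintro x ⟨σ, Ω, _, _, rfl⟩
    exact ⟨Ω, rfl⟩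
  · rintro x ⟨σ, Ω, hfeas, hord, rfl⟩
    -- bounds for the parent index
    have hlt1 : ∀ ℓ : Fin (relaxLen p ρ 1), (ℓ : ℕ) < k + M := fun ℓ => hK1 ▸ ℓ.2
    have hparlt : ∀ ℓ : Fin (relaxLen p ρ 1), ¬ (ℓ : ℕ) < k →
        k + ((ℓ : ℕ) - k) / g < relaxLen p ρ g := by
      intro ℓ hℓ
      have h2 := hlt1 ℓ
      have hlt : ((ℓ : ℕ) - k) < M := by omega
      rw [hKg]
      exact Nat.add_lt_add_left (Nat.div_lt_div_of_lt_of_dvd hgM hlt) k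
    have hklt : ∀ ℓ : Fin (relaxLen p ρ 1), (ℓ : ℕ) < k → (ℓ : ℕ) < relaxLen p ρ g := by
      intro ℓ hℓ; rw [hKg]; omega
    -- the parent job of each unit job
    set par : Fin (relaxLen p ρ 1) → Fin (relaxLen p ρ g) := fun ℓ =>
      if hl : (ℓ : ℕ) < k then ⟨(ℓ : ℕ), hklt ℓ hl⟩
      else ⟨k + ((ℓ : ℕ) - k) / g, hparlt ℓ hl⟩ with hpardef
    set σ' : Fin (relaxLen p ρ 1) → ℕ := fun ℓ =>
      if (ℓ : ℕ) < k then σ (par ℓ) else σ (par ℓ) + ((ℓ : ℕ) - k) % g with hσ'def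
    -- window inclusion
    have hwin : ∀ ℓ : Fin (relaxLen p ρ 1), ∀ i : ℕ,
        σ' ℓ ≤ i → i < σ' ℓ + relax p ρ 1 ℓ →
        σ (par ℓ) ≤ i ∧ i < σ (par ℓ) + relax p ρ g (par ℓ) := by
      intro ℓ i h1 h2
      by_cases hl : (ℓ : ℕ) < k
      · have epar : par ℓ = ⟨(ℓ : ℕ), hklt ℓ hl⟩ := by simp [hpardef, hl]
        have er : relax p ρ g (par ℓ) = p (ρ ⟨(ℓ : ℕ), hl⟩) := by
          rw [epar]; simp only [relax, Fin.val_mk]; rw [dif_pos hl]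
        have er1 : relax p ρ 1 ℓ = p (ρ ⟨(ℓ : ℕ), hl⟩) := by
          simp only [relax]; rw [dif_pos hl]
        simp only [hσ'def, if_pos hl] at h1 h2
        rw [er1] at h2
        rw [er]
        exact ⟨h1, h2⟩
      · have epar : par ℓ = ⟨k + ((ℓ : ℕ) - k) / g, hparlt ℓ hl⟩ := by
          simp [hpardef, hl]
        have hpk : ¬ (k + ((ℓ : ℕ) - k) / g < k) := not_lt.mpr (Nat.le_add_right _ _)
        have er : relax p ρ g (par ℓ) = g := by
          rw [epar]; simp only [relax, Fin.val_mk]; rw [dif_neg hpk]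
        have er1 : relax p ρ 1 ℓ = 1 := by
          simp only [relax]; rw [dif_neg hl]
        simp only [hσ'def, if_neg hl] at h1 h2
        rw [er1] at h2
        rw [er]
        have hmod : ((ℓ : ℕ) - k) % g < g := Nat.mod_lt _ (by omega)
        omega
    refine ⟨σ', Ω, ⟨hfeas.1, ?_, ?_, ?_⟩, ?_, rfl⟩
    · -- windows within horizon
      intro j
      have h1 := hfeas.2.1 (par j)
      have h2 := hwin j (σ' j + relax p ρ 1 j - 1) ?_ ?_
      · omega
      · have : 1 ≤ relax p ρ 1 j := by
          rw [relax]; split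
          · exact hp _
          · exact le_refl 1
        omega
      · have : 1 ≤ relax p ρ 1 j := by
          rw [relax]; split
          · exact hp _
          · exact le_refl 1
        omega
    · -- disjointness
      intro j j' hne i hcon
      obtain ⟨h1, h2, h3, h4⟩ := hcon
      have hw1 := hwin j i h1 h2
      have hw2 := hwin j' i h3 h4
      by_cases hpp : par j = par j'
      · -- same parent: both unfixed, unit windows are distinct singletons
        by_cases hl : (j : ℕ) < k
        · by_cases hl' : (j' : ℕ) < k
          · apply hne
            have : ((par j : Fin (relaxLen p ρ g)) : ℕ) = (j : ℕ) := by
              simp [hpardef, hl]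
            have h2' : ((par j' : Fin (relaxLen p ρ g)) : ℕ) = (j' : ℕ) := by
              simp [hpardef, hl']
            apply Fin.ext
            rw [← this, ← h2', hpp]
          · exfalso
            have e1 : ((par j : Fin (relaxLen p ρ g)) : ℕ) = (j : ℕ) := by
              simp [hpardef, hl]
            have e2 : ((par j' : Fin (relaxLen p ρ g)) : ℕ) = k + ((j' : ℕ) - k) / g := by
              simp [hpardef, hl']
            rw [hpp, e2] at e1
            have : k ≤ (j : ℕ) := e1 ▸ Nat.le_add_right _ _
            exact absurd this (not_le.mpr hl)
        · by_cases hl' : (j' : ℕ) < k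
          · exfalso
            have e1 : ((par j : Fin (relaxLen p ρ g)) : ℕ) = k + ((j : ℕ) - k) / g := by
              simp [hpardef, hl]
            have e2 : ((par j' : Fin (relaxLen p ρ g)) : ℕ) = (j' : ℕ) := by
              simp [hpardef, hl']
            rw [hpp, e2] at e1
            have : k ≤ (j' : ℕ) := e1 ▸ Nat.le_add_right _ _
            exact absurd this (not_le.mpr hl')
          · -- both unfixed with same parent
            have e1 : ((par j : Fin (relaxLen p ρ g)) : ℕ) = k + ((j : ℕ) - k) / g := by
              simp [hpardef, hl]
            have e2 : ((par j' : Fin (relaxLen p ρ g)) : ℕ) = k + ((j' : ℕ) - k) / g := by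
              simp [hpardef, hl']
            have ediv : ((j : ℕ) - k) / g = ((j' : ℕ) - k) / g := by
              rw [hpp] at e1; omega
            have er1 : relax p ρ 1 j = 1 := by
              simp only [relax]; rw [dif_neg hl]
            have er1' : relax p ρ 1 j' = 1 := by
              simp only [relax]; rw [dif_neg hl']
            simp only [hσ'def, if_neg hl, if_neg hl'] at h1 h2 h3 h4
            rw [er1] at h2
            rw [er1'] at h4
            rw [hpp] at h1 h2
            have emod : ((j : ℕ) - k) % g = ((j' : ℕ) - k) % g := by omega
            apply hne
            apply Fin.ext
            have heq : (j : ℕ) - k = (j' : ℕ) - k := by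
              rw [← Nat.div_add_mod ((j : ℕ) - k) g, ← Nat.div_add_mod ((j' : ℕ) - k) g,
                ediv, emod]
            omega
      · exact hfeas.2.2.1 (par j) (par j') hpp i ⟨hw1.1, hw1.2, hw2.1, hw2.2⟩
    · -- processing intervals
      intro j i hi1 hi2
      have hw := hwin j i hi1 hi2
      exact hfeas.2.2.2 (par j) i hw.1 hw.2
    · -- ordering by the identity
      intro ℓ h1
      simp only [Equiv.refl_apply]
      have h1' : ℓ + 1 < k + M := by rw [← hK1]; exact h1
      have hℓlt : ℓ < relaxLen p ρ 1 := by omega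
      have hordv : ∀ (a : ℕ) (ha1 : a < relaxLen p ρ g) (ha2 : a + 1 < relaxLen p ρ g),
          σ ⟨a, ha1⟩ + relax p ρ g ⟨a, ha1⟩ ≤ σ ⟨a + 1, ha2⟩ := by
        intro a ha1 ha2
        have := hord a ha2
        simpa using this
      have hordv' : ∀ (a b : ℕ), b = a + 1 →
          ∀ (ha1 : a < relaxLen p ρ g) (hb : b < relaxLen p ρ g),
          σ ⟨a, ha1⟩ + relax p ρ g ⟨a, ha1⟩ ≤ σ ⟨b, hb⟩ := by
        intro a b hb ha1 hb1
        subst hb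
        exact hordv a ha1 hb1
      by_cases hl : ℓ + 1 < k
      · -- both fixed
        have hlk : ℓ < k := by omega
        simp only [hσ'def, hpardef, relax, Fin.val_mk]
        simp only [if_pos hlk, if_pos hl, dif_pos hlk, dif_pos hl]
        have hO := hordv ℓ (by rw [hKg]; omega) (by rw [hKg]; omega)
        have hr : relax p ρ g ⟨ℓ, by rw [hKg]; omega⟩ = p (ρ ⟨ℓ, hlk⟩) := by
          simp only [relax, Fin.val_mk]
          rw [dif_pos hlk]
        rw [hr] at hO
        omega
      · by_cases hlk : ℓ < k
        · -- ℓ = k - 1, ℓ + 1 = k : last fixed to first unit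
          have hlke : ℓ + 1 = k := by omega
          simp only [hσ'def, hpardef, relax, Fin.val_mk]
          simp only [if_pos hlk, if_neg hl, dif_pos hlk, dif_neg hl]
          have hz : ℓ + 1 - k = 0 := by omega
          simp only [hz, Nat.zero_mod, Nat.zero_div, Nat.add_zero]
          have hO := hordv' ℓ k hlke.symm (by rw [hKg]; omega) (by rw [hKg]; omega)
          have hr : relax p ρ g ⟨ℓ, by rw [hKg]; omega⟩ = p (ρ ⟨ℓ, hlk⟩) := by
            simp only [relax, Fin.val_mk]
            rw [dif_pos hlk]
          rw [hr] at hO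
          omega
        · -- both unit jobs
          simp only [hσ'def, hpardef, relax, Fin.val_mk]
          simp only [if_neg hlk, if_neg hl, dif_neg hlk, dif_neg hl]
          have ht1 : ℓ + 1 - k = (ℓ - k) + 1 := by omega
          simp only [ht1]
          rcases succ_div_mod (ℓ - k) g (by omega) with ⟨hm, hd⟩ | ⟨hmg, hm0, hd⟩
          · simp only [hm, hd]
            omega
          · simp only [hm0, hd]
            have hdivlt : k + (ℓ - k) / g + 1 < relaxLen p ρ g := by
              have h2lt : ℓ + 1 - k < M := by omega
              have hlt2 := Nat.div_lt_div_of_lt_of_dvd hgM h2lt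
              rw [ht1, hd] at hlt2
              rw [hKg]
              exact Nat.add_lt_add_left hlt2 k
            have hlt1 : k + (ℓ - k) / g < relaxLen p ρ g := Nat.lt_of_succ_lt hdivlt
            have hO := hordv' (k + (ℓ - k) / g) (k + ((ℓ - k) / g + 1)) (by omega)
              hlt1 (by omega)
            have hr : relax p ρ g ⟨k + (ℓ - k) / g, hlt1⟩ = g := by
              simp only [relax, Fin.val_mk]
              rw [dif_neg (not_lt.mpr (Nat.le_add_right _ _))]
            rw [hr] at hO
            omega

end TOU
end

section
/- Let ρ : Fin k → Fin n be an injective prefix, let q_1 be the unit relaxation of (p, ρ), and let (σ̃, Ω) be a feasible solution of q_1 ordered by the identity permutation with TEC(σ̃, Ω) = TEC*(q_1, id). Let B_1, …, B_K be the maximal blocks of consecutive intervals i with Ω i = (proc, proc), and suppose Fin n admits a partition into sets A_1, …, A_K with Σ_{j ∈ A_k} p j ≤ |B_k| for every k. Then there exists σ : Fin n → ℕ such that (σ, Ω) is a feasible solution of p and TEC(σ, Ω) ≤ TEC*(p, π) for every permutation π of Fin n with π ℓ = ρ ℓ for all ℓ < k. -/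
namespace TOU

variable {S : Type*}

theorem le_infQ (A : Set ℚ) (y : WithTop ℚ) (hy : ∀ x ∈ A, y ≤ (x : WithTop ℚ)) :
    y ≤ infQ A := by
  unfold infQ
  by_cases hex : ∃ x ∈ A, ∀ z ∈ A, x ≤ z
  · rw [dif_pos hex]; exact hy _ hex.choose_spec.1
  · rw [dif_neg hex]; exact le_top

theorem infQ_le (A : Set ℚ) (x : ℚ) (hx : x ∈ A) (hne : infQ A ≠ ⊤) :
    infQ A ≤ (x : WithTop ℚ) := by
  unfold infQ at hne ⊢
  by_cases hex : ∃ x ∈ A, ∀ z ∈ A, x ≤ z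
  · rw [dif_pos hex]
    exact_mod_cast hex.choose_spec.2 x hx
  · rw [dif_neg hex] at hne; exact absurd rfl hne

theorem orders_mono {n : ℕ} {p σ : Fin n → ℕ} {π : Equiv.Perm (Fin n)}
    (hOrd : Orders p σ π) {l1 l2 : ℕ} (h1 : l1 < n) (h2 : l2 < n) (hle : l1 ≤ l2) :
    σ (π ⟨l1, h1⟩) ≤ σ (π ⟨l2, h2⟩) := by
  induction l2 with
  | zero =>
    have : l1 = 0 := by omega
    subst this; rfl
  | succ m ih =>
    rcases Nat.lt_or_ge l1 (m + 1) with hlt | hge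
    · have hm : m < n := by omega
      have hstep := hOrd m h2
      have hmono := ih hm (by omega)
      exact le_trans hmono (le_trans (Nat.le_add_right _ _) hstep)
    · have : l1 = m + 1 := by omega
      subst this; rfl

theorem orders_gap {n : ℕ} {p σ : Fin n → ℕ} {π : Equiv.Perm (Fin n)}
    (hOrd : Orders p σ π) {l1 l2 : ℕ} (h2 : l2 < n) (hlt : l1 < l2) :
    σ (π ⟨l1, by omega⟩) + p (π ⟨l1, by omega⟩) ≤ σ (π ⟨l2, h2⟩) := by
  have h1' : l1 + 1 < n := by omega
  exact le_trans (hOrd l1 h1') (orders_mono hOrd h1' h2 hlt)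

/-- the bin-packing primal heuristic: if the jobs pack into the
maximal processing blocks of an optimal relaxed solution, the recovered solution is
optimal among all sequences extending the prefix. -/
theorem bin_packing_primal_heuristic {S : Type*} [Fintype S] (off proc : S)
    (T : S → S → ℕ∞) (hT : ∀ s : S, T s s = 1)
    (P : S → S → ℚ) {h : ℕ} (hh : 2 ≤ h) (c : Fin h → ℚ)
    {n : ℕ} (p : Fin n → ℕ) (hp : ∀ j, 1 ≤ p j)
    {k : ℕ} (ρ : Fin k → Fin n) (hρ : Function.Injective ρ)
    (σt : Fin (relaxLen p ρ 1) → ℕ) (Ω : Fin h → S × S)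
    (hfeas : Feasible off proc T (relax p ρ 1) σt Ω)
    (hord : Orders (relax p ρ 1) σt (Equiv.refl _))
    (hopt : ((TEC P c Ω : ℚ) : WithTop ℚ) =
      TECopt off proc T P c (relax p ρ 1) (Equiv.refl _))
    {K : ℕ} (a b : Fin K → ℕ) (hblocks : IsMaxProcBlocks proc Ω a b)
    (A : Fin K → Finset (Fin n))
    (hpart : ∀ j : Fin n, ∃! k', j ∈ A k')
    (hfit : ∀ k', ∑ j ∈ A k', p j ≤ b k' - a k') :
    ∃ σ : Fin n → ℕ, Feasible off proc T p σ Ω ∧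
      ∀ (π : Equiv.Perm (Fin n)),
        (∀ (ℓ : Fin n) (hℓ : (ℓ : ℕ) < k), π ℓ = ρ ⟨ℓ, hℓ⟩) →
        ((TEC P c Ω : ℚ) : WithTop ℚ) ≤ TECopt off proc T P c p π := by
  classical
  have hkn : k ≤ n := by
    simpa using Fintype.card_le_of_injective ρ hρ
  -- Part 1 : pack the jobs into the blocks
  have hexA : ∀ j : Fin n, ∃ k', j ∈ A k' := fun j => (hpart j).exists
  choose kOf hmemA using hexA
  obtain ⟨σ, hσdef⟩ : ∃ σ : Fin n → ℕ, ∀ j,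
      σ j = a (kOf j) + ∑ j' ∈ (A (kOf j)).filter (fun x => x < j), p j' :=
    ⟨_, fun _ => rfl⟩
  have hub : ∀ j, σ j + p j ≤ b (kOf j) := by
    intro j
    have hsub : (A (kOf j)).filter (fun x => x < j) ⊆ (A (kOf j)).erase j := by
      intro x hx
      simp only [Finset.mem_filter] at hx
      exact Finset.mem_erase.2 ⟨ne_of_lt hx.2, hx.1⟩
    have h1 : ∑ j' ∈ (A (kOf j)).filter (fun x => x < j), p j' + p j ≤
        ∑ j' ∈ A (kOf j), p j' := by
      rw [← Finset.sum_erase_add (A (kOf j)) p (hmemA j)]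
      exact Nat.add_le_add_right (Finset.sum_le_sum_of_subset hsub) _
    have h2 := hfit (kOf j)
    have h3 := (hblocks.1 (kOf j)).1
    rw [hσdef]
    omega
  have hsep : ∀ j j' : Fin n, kOf j = kOf j' → j < j' → σ j + p j ≤ σ j' := by
    intro j j' hk hlt
    have hsub : insert j ((A (kOf j)).filter (fun x => x < j)) ⊆
        (A (kOf j)).filter (fun x => x < j') := by
      intro x hx
      rcases Finset.mem_insert.1 hx with rfl | hx
      · exact Finset.mem_filter.2 ⟨hmemA x, hlt⟩
      · simp only [Finset.mem_filter] at hx ⊢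
        exact ⟨hx.1, lt_trans hx.2 hlt⟩
    have hnotin : j ∉ (A (kOf j)).filter (fun x => x < j) := by simp
    have hsum := Finset.sum_le_sum_of_subset (f := p) hsub
    rw [Finset.sum_insert hnotin] at hsum
    rw [hσdef, hσdef, ← hk]
    omega
  have halb : ∀ j, a (kOf j) ≤ σ j := by
    intro j; rw [hσdef]; exact Nat.le_add_right _ _
  have hfeasP : Feasible off proc T p σ Ω := by
    refine ⟨hfeas.1, ?_, ?_, ?_⟩
    · intro j
      exact le_trans (hub j) (hblocks.1 (kOf j)).2
    · intro j j' hne i hi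
      obtain ⟨hi1, hi2, hi3, hi4⟩ := hi
      by_cases hk : kOf j = kOf j'
      · rcases lt_or_gt_of_ne hne with hlt | hlt
        · have := hsep j j' hk hlt; omega
        · have := hsep j' j hk.symm hlt; omega
      · rcases lt_or_gt_of_ne hk with hlt | hlt
        · have h1 := hub j
          have h2 := hblocks.2.2.2 _ _ hlt
          have h3 := halb j'
          omega
        · have h1 := hub j'
          have h2 := hblocks.2.2.2 _ _ hlt
          have h3 := halb j
          omega
    · intro j i hi1 hi2
      exact hblocks.2.1 (kOf j) i (le_trans (halb j) hi1) (lt_of_lt_of_le hi2 (hub j))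
  refine ⟨σ, hfeasP, ?_⟩
  -- Part 2 : optimality
  intro π hπ
  refine le_infQ _ _ ?_
  rintro x ⟨σ', Ω', hfeas', hord', rfl⟩
  -- build a feasible solution of the unit relaxation with profile Ω'
  have hρπ : ∀ (t : ℕ) (ht : t < k), ρ ⟨t, ht⟩ = π ⟨t, lt_of_lt_of_le ht hkn⟩ :=
    fun t ht => (hπ ⟨t, lt_of_lt_of_le ht hkn⟩ ht).symm
  have hunfix : ∀ j ∈ unfixed ρ, ∃ l : Fin n, k ≤ (l : ℕ) ∧ π l = j := by
    intro j hj
    refine ⟨π.symm j, ?_, π.apply_symm_apply j⟩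
    by_contra hlt
    push_neg at hlt
    have hc := hπ (π.symm j) hlt
    rw [π.apply_symm_apply] at hc
    simp only [unfixed, Finset.mem_filter] at hj
    exact hj.2 _ hc.symm
  have hdisj : ∀ j j' : Fin n, j ≠ j' →
      Disjoint (Finset.Ico (σ' j) (σ' j + p j)) (Finset.Ico (σ' j') (σ' j' + p j')) := by
    intro j j' hne
    rw [Finset.disjoint_left]
    intro i hi hi'
    simp only [Finset.mem_Ico] at hi hi'
    exact hfeas'.2.2.1 j j' hne i ⟨hi.1, hi.2, hi'.1, hi'.2⟩
  set U : Finset ℕ := (unfixed ρ).biUnion (fun j => Finset.Ico (σ' j) (σ' j + p j)) with hU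
  have hUmem : ∀ x ∈ U, ∃ j ∈ unfixed ρ, σ' j ≤ x ∧ x < σ' j + p j := by
    intro x hx
    simp only [hU, Finset.mem_biUnion, Finset.mem_Ico] at hx
    obtain ⟨j, hj, h1, h2⟩ := hx
    exact ⟨j, hj, h1, h2⟩
  have hcard : U.card = (∑ j ∈ unfixed ρ, p j) / 1 := by
    rw [Nat.div_one, hU, Finset.card_biUnion]
    · apply Finset.sum_congr rfl
      intro j _
      rw [Nat.card_Ico]
      omega
    · intro j hj j' hj' hne
      exact hdisj j j' hne
  set e := U.orderIsoOfFin hcard with he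
  have hUlbFixed : ∀ x ∈ U, ∀ (t : ℕ) (ht : t < k),
      σ' (ρ ⟨t, ht⟩) + p (ρ ⟨t, ht⟩) ≤ x := by
    intro x hx t ht
    obtain ⟨j, hj, hx1, hx2⟩ := hUmem x hx
    obtain ⟨l, hl1, hl2⟩ := hunfix j hj
    have hgap := orders_gap hord' (l1 := t) (l2 := (l : ℕ)) l.isLt
      (lt_of_lt_of_le ht hl1)
    rw [hρπ t ht]
    refine le_trans hgap ?_
    rw [Fin.eta, hl2]
    exact hx1
  -- the relaxed schedule
  obtain ⟨g, hgdef⟩ : ∃ g : ℕ → ℕ, ∀ t, g t =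
      if hl : t < k then σ' (ρ ⟨t, hl⟩)
      else if h2 : t - k < (∑ j ∈ unfixed ρ, p j) / 1 then (e ⟨t - k, h2⟩ : ℕ) else 0 :=
    ⟨_, fun _ => rfl⟩
  have hgfix : ∀ (t : ℕ) (ht : t < k), g t = σ' (ρ ⟨t, ht⟩) := by
    intro t ht; rw [hgdef, dif_pos ht]
  have hgU : ∀ t : ℕ, k ≤ t → t < relaxLen p ρ 1 → g t ∈ U := by
    intro t h1 h2
    have hlt : t - k < (∑ j ∈ unfixed ρ, p j) / 1 := by
      unfold relaxLen at h2; omega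
    rw [hgdef, dif_neg (by omega), dif_pos hlt]
    exact (e ⟨t - k, hlt⟩).2
  have hcoverg : ∀ t : ℕ, k ≤ t → t < relaxLen p ρ 1 →
      ∃ j ∈ unfixed ρ, σ' j ≤ g t ∧ g t < σ' j + p j := by
    intro t h1 h2
    exact hUmem _ (hgU t h1 h2)
  have hgmono : ∀ t1 t2 : ℕ, k ≤ t1 → t1 < t2 → t2 < relaxLen p ρ 1 →
      g t1 < g t2 := by
    intro t1 t2 h1 h2 h3
    have hlt2 : t2 - k < (∑ j ∈ unfixed ρ, p j) / 1 := by
      unfold relaxLen at h3; omega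
    have hlt1 : t1 - k < (∑ j ∈ unfixed ρ, p j) / 1 := by omega
    rw [hgdef t1, hgdef t2, dif_neg (by omega : ¬ t1 < k), dif_pos hlt1,
      dif_neg (by omega : ¬ t2 < k), dif_pos hlt2]
    have hmk : (⟨t1 - k, hlt1⟩ : Fin _) < ⟨t2 - k, hlt2⟩ := by
      rw [Fin.mk_lt_mk]; omega
    exact Subtype.coe_lt_coe.2 (e.strictMono hmk)
  obtain ⟨σ2, hσ2eval⟩ : ∃ σ2 : Fin (relaxLen p ρ 1) → ℕ, ∀ ℓ, σ2 ℓ = g (ℓ : ℕ) :=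
    ⟨_, fun _ => rfl⟩
  have hrelax : ∀ ℓ : Fin (relaxLen p ρ 1),
      relax p ρ 1 ℓ = if hl : (ℓ : ℕ) < k then p (ρ ⟨(ℓ : ℕ), hl⟩) else 1 :=
    fun _ => rfl
  have hfeas2 : Feasible off proc T (relax p ρ 1) σ2 Ω' := by
    refine ⟨hfeas'.1, ?_, ?_, ?_⟩
    · intro ℓ
      rw [hσ2eval, hrelax]
      by_cases hl : (ℓ : ℕ) < k
      · rw [dif_pos hl, hgfix _ hl]
        exact hfeas'.2.1 _
      · rw [dif_neg hl]
        obtain ⟨j, hj, h1, h2⟩ := hcoverg (ℓ : ℕ) (by omega) ℓ.isLt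
        have := hfeas'.2.1 j
        omega
    · rintro ℓ1 ℓ2 hne i ⟨hi1, hi2, hi3, hi4⟩
      rw [hσ2eval] at hi1 hi2 hi3 hi4
      rw [hrelax] at hi2 hi4
      by_cases h1 : (ℓ1 : ℕ) < k <;> by_cases h2 : (ℓ2 : ℕ) < k
      · rw [dif_pos h1] at hi2
        rw [dif_pos h2] at hi4
        rw [hgfix _ h1] at hi1 hi2
        rw [hgfix _ h2] at hi3 hi4
        refine hfeas'.2.2.1 _ _ ?_ i ⟨hi1, hi2, hi3, hi4⟩
        intro hc
        exact hne (Fin.ext (by simpa using congrArg Fin.val (hρ hc)))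
      · rw [dif_pos h1] at hi2
        rw [dif_neg h2] at hi4
        rw [hgfix _ h1] at hi1 hi2
        obtain ⟨j, hj, hc1, hc2⟩ := hcoverg (ℓ2 : ℕ) (by omega) ℓ2.isLt
        have hne2 : ρ ⟨(ℓ1 : ℕ), h1⟩ ≠ j := by
          simp only [unfixed, Finset.mem_filter] at hj
          exact hj.2 _
        exact hfeas'.2.2.1 _ _ hne2 i ⟨hi1, hi2, by omega, by omega⟩
      · rw [dif_neg h1] at hi2
        rw [dif_pos h2] at hi4
        rw [hgfix _ h2] at hi3 hi4
        obtain ⟨j, hj, hc1, hc2⟩ := hcoverg (ℓ1 : ℕ) (by omega) ℓ1.isLt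
        have hne2 : ρ ⟨(ℓ2 : ℕ), h2⟩ ≠ j := by
          simp only [unfixed, Finset.mem_filter] at hj
          exact hj.2 _
        exact hfeas'.2.2.1 _ _ hne2 i ⟨hi3, hi4, by omega, by omega⟩
      · rw [dif_neg h1] at hi2
        rw [dif_neg h2] at hi4
        have hv : (ℓ1 : ℕ) ≠ (ℓ2 : ℕ) := fun hc => hne (Fin.ext hc)
        rcases Nat.lt_or_ge (ℓ1 : ℕ) (ℓ2 : ℕ) with hlt | hge
        · have := hgmono _ _ (by omega) hlt ℓ2.isLt
          omega
        · have hlt : (ℓ2 : ℕ) < (ℓ1 : ℕ) := by omega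
          have := hgmono _ _ (by omega) hlt ℓ1.isLt
          omega
    · intro ℓ i hi1 hi2
      rw [hσ2eval] at hi1 hi2
      rw [hrelax] at hi2
      by_cases hl : (ℓ : ℕ) < k
      · rw [dif_pos hl] at hi2
        rw [hgfix _ hl] at hi1 hi2
        exact hfeas'.2.2.2 _ i hi1 hi2
      · rw [dif_neg hl] at hi2
        obtain ⟨j, hj, hc1, hc2⟩ := hcoverg (ℓ : ℕ) (by omega) ℓ.isLt
        exact hfeas'.2.2.2 j i (by omega) (by omega)
  have hord2 : Orders (relax p ρ 1) σ2 (Equiv.refl _) := by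
    intro t h1
    simp only [Equiv.refl_apply]
    have hrt : t < relaxLen p ρ 1 := by omega
    rw [hσ2eval, hσ2eval, hrelax]
    simp only [Fin.val_mk]
    by_cases hl : t < k
    · rw [dif_pos hl, hgfix _ hl]
      by_cases hl1 : t + 1 < k
      · rw [hgfix (t + 1) hl1]
        rw [hρπ _ hl, hρπ (t + 1) hl1]
        exact hord' t (by omega)
      · exact hUlbFixed _ (hgU (t + 1) (by omega) h1) _ hl
    · rw [dif_neg hl]
      have := hgmono t (t + 1) (by omega) (by omega) h1
      omega
  have hne : TECopt off proc T P c (relax p ρ 1) (Equiv.refl _) ≠ ⊤ := by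
    rw [← hopt]; exact WithTop.coe_ne_top
  rw [hopt]
  unfold TECopt at hne ⊢
  exact infQ_le _ _ ⟨σ2, Ω', hfeas2, hord2, rfl⟩ hne

end TOU
end

section
/- Let ρ : Fin k → Fin n be an injective prefix and let j_0 ∉ range ρ; let ρ' : Fin (k+1) → Fin n be the injective prefix with ρ' ℓ = ρ ℓ for ℓ < k and ρ' k = j_0. Then TEC*(q'_1, id) ≥ TEC*(q_1, id), where q'_1 and q_1 are the unit relaxations of (p, ρ') and (p, ρ) respectively; that is, the unit-relaxation lower bound is nondecreasing as the fixed prefix is extended. -/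
namespace TOU

variable {S : Type*}

open Classical in
lemma infQ_mono_s12 {A B : Set ℚ} (hA : A.Finite) (hBA : B ⊆ A) : infQ A ≤ infQ B := by
  by_cases hB : ∃ x ∈ B, ∀ y ∈ B, x ≤ y
  · have hxB : hB.choose ∈ B := hB.choose_spec.1
    have hAex : ∃ x ∈ A, ∀ y ∈ A, x ≤ y := by
      obtain ⟨x, hx, hmin⟩ := Finset.exists_min_image hA.toFinset id
        ⟨hB.choose, hA.mem_toFinset.2 (hBA hxB)⟩
      exact ⟨x, hA.mem_toFinset.1 hx, fun y hy => hmin y (hA.mem_toFinset.2 hy)⟩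
    simp only [infQ]
    rw [dif_pos hB, dif_pos hAex]
    exact_mod_cast hAex.choose_spec.2 _ (hBA hxB)
  · simp only [infQ]
    rw [dif_neg hB]
    exact le_top

/-- the unit-relaxation lower bound is nondecreasing as the fixed
prefix is extended by one job. -/
theorem unit_relaxation_monotone_in_prefix {S : Type*} [Fintype S] (off proc : S)
    (T : S → S → ℕ∞) (hT : ∀ s : S, T s s = 1)
    (P : S → S → ℚ) {h : ℕ} (hh : 2 ≤ h) (c : Fin h → ℚ)
    {n : ℕ} (p : Fin n → ℕ) (hp : ∀ j, 1 ≤ p j)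
    {k : ℕ} (ρ : Fin k → Fin n) (hρ : Function.Injective ρ)
    (j₀ : Fin n) (hj₀ : ∀ ℓ, ρ ℓ ≠ j₀) :
    TECopt off proc T P c
        (relax p (fun ℓ : Fin (k + 1) =>
          if hl : (ℓ : ℕ) < k then ρ ⟨(ℓ : ℕ), hl⟩ else j₀) 1)
        (Equiv.refl _) ≥
      TECopt off proc T P c (relax p ρ 1) (Equiv.refl _) := by
  classical
  set ρ' : Fin (k + 1) → Fin n := fun ℓ : Fin (k + 1) =>
    if hl : (ℓ : ℕ) < k then ρ ⟨(ℓ : ℕ), hl⟩ else j₀ with hρ'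
  rw [ge_iff_le, TECopt, TECopt]
  apply infQ_mono_s12
  · apply Set.Finite.subset (Set.finite_range (TEC P c))
    rintro x ⟨σ, Ω, -, -, rfl⟩
    exact ⟨Ω, rfl⟩
  rintro x ⟨σ', Ω, ⟨hvalid, hbd', hdisj', hproc'⟩, hord, rfl⟩
  -- arithmetic facts
  have hp1 : 1 ≤ p j₀ := hp j₀
  have hj₀mem : j₀ ∈ unfixed ρ := by
    simp only [unfixed, Finset.mem_filter, Finset.mem_univ, true_and]
    exact hj₀
  have hufx : unfixed ρ' = (unfixed ρ).erase j₀ := by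
    ext j
    simp only [unfixed, Finset.mem_filter, Finset.mem_univ, true_and, Finset.mem_erase]
    constructor
    · intro hj
      have h1 : ρ' ⟨k, Nat.lt_succ_self k⟩ = j₀ := by simp [hρ']
      refine ⟨fun e => hj ⟨k, Nat.lt_succ_self k⟩ (h1.trans e.symm), fun ℓ => ?_⟩
      have h2 : ρ' ⟨(ℓ : ℕ), by omega⟩ = ρ ℓ := by simp [hρ', ℓ.isLt]
      exact fun e => hj ⟨(ℓ : ℕ), by omega⟩ (h2.trans e)
    · rintro ⟨h1, h2⟩ ℓ
      by_cases hl : (ℓ : ℕ) < k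
      · have h3 : ρ' ℓ = ρ ⟨(ℓ : ℕ), hl⟩ := by simp [hρ', hl]
        rw [h3]; exact h2 _
      · have h3 : ρ' ℓ = j₀ := by simp [hρ', hl]
        rw [h3]; exact fun e => h1 e.symm
  have hsum : (∑ j ∈ unfixed ρ', p j) + p j₀ = ∑ j ∈ unfixed ρ, p j := by
    rw [hufx]; exact Finset.sum_erase_add _ _ hj₀mem
  have hS0 : p j₀ ≤ ∑ j ∈ unfixed ρ, p j :=
    Finset.single_le_sum (fun i _ => Nat.zero_le _) hj₀mem
  have hN : relaxLen p ρ 1 = k + ∑ j ∈ unfixed ρ, p j := by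
    simp [relaxLen]
  have hN' : relaxLen p ρ' 1 = (k + 1) + ∑ j ∈ unfixed ρ', p j := by
    simp [relaxLen]
  have hlen : relaxLen p ρ' 1 + p j₀ = relaxLen p ρ 1 + 1 := by omega
  have hkN' : k < relaxLen p ρ' 1 := by omega
  have hkpjN : k + p j₀ ≤ relaxLen p ρ 1 := by omega
  -- values of the job lists
  have hql : ∀ (t : ℕ) (ht : t < relaxLen p ρ 1) (h1 : t < k),
      relax p ρ 1 ⟨t, ht⟩ = p (ρ ⟨t, h1⟩) := fun t ht h1 => dif_pos h1
  have hqh : ∀ (t : ℕ) (ht : t < relaxLen p ρ 1), k ≤ t →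
      relax p ρ 1 ⟨t, ht⟩ = 1 := fun t ht h1 => dif_neg (Nat.not_lt.mpr h1)
  have hq'l : ∀ (t : ℕ) (ht : t < relaxLen p ρ' 1) (h1 : t < k),
      relax p ρ' 1 ⟨t, ht⟩ = p (ρ ⟨t, h1⟩) := by
    intro t ht h1
    show (if hl : t < k + 1 then p (ρ' ⟨t, hl⟩) else 1) = _
    rw [dif_pos (by omega : t < k + 1)]
    simp [hρ', h1]
  have hq'k : ∀ (ht : k < relaxLen p ρ' 1),
      relax p ρ' 1 ⟨k, ht⟩ = p j₀ := by
    intro ht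
    show (if hl : k < k + 1 then p (ρ' ⟨k, hl⟩) else 1) = _
    rw [dif_pos (Nat.lt_succ_self k)]
    simp [hρ']
  have hq'h : ∀ (t : ℕ) (ht : t < relaxLen p ρ' 1), k < t →
      relax p ρ' 1 ⟨t, ht⟩ = 1 := fun t ht h1 => dif_neg (Nat.not_lt.mpr h1)
  -- ordering hypothesis for σ'
  have hordI : ∀ (t : ℕ) (ht : t + 1 < relaxLen p ρ' 1),
      σ' ⟨t, by omega⟩ + relax p ρ' 1 ⟨t, by omega⟩ ≤ σ' ⟨t + 1, ht⟩ := by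
    intro t ht
    have := hord t ht
    simpa using this
  -- the new schedule
  obtain ⟨σ, hσlo, hσmid, hσhi⟩ :
      ∃ σ : Fin (relaxLen p ρ 1) → ℕ,
        (∀ (t : ℕ) (ht : t < relaxLen p ρ 1) (h1 : t < k),
          σ ⟨t, ht⟩ = σ' ⟨t, by omega⟩) ∧
        (∀ (t : ℕ) (ht : t < relaxLen p ρ 1), k ≤ t → t < k + p j₀ →
          σ ⟨t, ht⟩ = σ' ⟨k, hkN'⟩ + (t - k)) ∧
        (∀ (t : ℕ) (ht : t < relaxLen p ρ 1), k + p j₀ ≤ t →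
          σ ⟨t, ht⟩ = σ' ⟨t + 1 - p j₀, by omega⟩) := by
    refine ⟨fun ℓ =>
      if h1 : (ℓ : ℕ) < k then σ' ⟨(ℓ : ℕ), by omega⟩
      else if h2 : (ℓ : ℕ) < k + p j₀ then σ' ⟨k, hkN'⟩ + ((ℓ : ℕ) - k)
      else σ' ⟨(ℓ : ℕ) + 1 - p j₀, by have := ℓ.isLt; omega⟩, ?_, ?_, ?_⟩
    · intro t ht h1; exact dif_pos h1
    · intro t ht h1 h2
      show (if h1' : t < k then σ' ⟨t, by omega⟩
        else if h2' : t < k + p j₀ then σ' ⟨k, hkN'⟩ + (t - k)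
        else σ' ⟨t + 1 - p j₀, by omega⟩) = σ' ⟨k, hkN'⟩ + (t - k)
      rw [dif_neg (by omega : ¬ t < k), dif_pos h2]
    · intro t ht h1
      show (if h1' : t < k then σ' ⟨t, by omega⟩
        else if h2' : t < k + p j₀ then σ' ⟨k, hkN'⟩ + (t - k)
        else σ' ⟨t + 1 - p j₀, by omega⟩) = σ' ⟨t + 1 - p j₀, by omega⟩
      rw [dif_neg (by omega : ¬ t < k), dif_neg (by omega : ¬ t < k + p j₀)]
  -- each new window sits inside an old window
  have hcont : ∀ (t : ℕ) (ht : t < relaxLen p ρ 1), ∃ m : Fin (relaxLen p ρ' 1),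
      σ' m ≤ σ ⟨t, ht⟩ ∧ σ ⟨t, ht⟩ + relax p ρ 1 ⟨t, ht⟩ ≤ σ' m + relax p ρ' 1 m := by
    intro t ht
    rcases Nat.lt_or_ge t k with h1 | h1
    · refine ⟨⟨t, by omega⟩, ?_⟩
      rw [hσlo _ ht h1, hql _ ht h1, hq'l _ (by omega) h1]
      exact ⟨le_refl _, le_refl _⟩
    rcases Nat.lt_or_ge t (k + p j₀) with h2 | h2
    · refine ⟨⟨k, hkN'⟩, ?_⟩
      rw [hσmid _ ht h1 h2, hqh _ ht h1, hq'k hkN']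
      omega
    · refine ⟨⟨t + 1 - p j₀, by omega⟩, ?_⟩
      rw [hσhi _ ht h2, hqh _ ht (by omega), hq'h _ (by omega) (by omega)]
      exact ⟨le_refl _, le_refl _⟩
  -- the new schedule is ordered by the identity
  have horders : Orders (relax p ρ 1) σ (Equiv.refl _) := by
    intro ℓ h1
    simp only [Equiv.refl_apply]
    rcases Nat.lt_or_ge (ℓ + 1) k with hc1 | hc1
    · rw [hσlo ℓ (by omega) (by omega), hσlo (ℓ + 1) h1 hc1, hql ℓ (by omega) (by omega)]
      have h3 := hordI ℓ (by omega)
      rw [hq'l ℓ (by omega) (by omega)] at h3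
      exact h3
    rcases Nat.lt_or_ge ℓ k with hc2 | hc2
    · -- ℓ + 1 = k
      have hek : ℓ + 1 = k := by omega
      rw [hσlo ℓ (by omega) hc2, hql ℓ (by omega) hc2,
        hσmid (ℓ + 1) h1 (by omega) (by omega)]
      have h3 := hordI ℓ (by omega)
      rw [hq'l ℓ (by omega) hc2] at h3
      have h4 : σ' ⟨ℓ + 1, by omega⟩ = σ' ⟨k, hkN'⟩ := by
        congr 1; exact Fin.ext hek
      omega
    rcases Nat.lt_or_ge (ℓ + 1) (k + p j₀) with hc3 | hc3
    · rw [hσmid ℓ (by omega) hc2 (by omega), hσmid (ℓ + 1) h1 (by omega) hc3,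
        hqh ℓ (by omega) hc2]
      omega
    rcases Nat.lt_or_ge ℓ (k + p j₀) with hc4 | hc4
    · -- ℓ + 1 = k + p j₀
      rw [hσmid ℓ (by omega) hc2 hc4, hqh ℓ (by omega) hc2,
        hσhi (ℓ + 1) h1 (by omega)]
      have h3 := hordI k (by omega)
      rw [hq'k (by omega)] at h3
      have h4 : σ' ⟨ℓ + 1 + 1 - p j₀, by omega⟩ = σ' ⟨k + 1, by omega⟩ := by
        congr 1; exact Fin.ext (show ℓ + 1 + 1 - p j₀ = k + 1 by omega)
      omega
    · rw [hσhi ℓ (by omega) hc4, hqh ℓ (by omega) (by omega),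
        hσhi (ℓ + 1) h1 (by omega)]
      have h3 := hordI (ℓ + 1 - p j₀) (by omega)
      rw [hq'h (ℓ + 1 - p j₀) (by omega) (by omega)] at h3
      have h4 : σ' ⟨ℓ + 1 - p j₀ + 1, by omega⟩ = σ' ⟨ℓ + 1 + 1 - p j₀, by omega⟩ := by
        congr 1; exact Fin.ext (show ℓ + 1 - p j₀ + 1 = ℓ + 1 + 1 - p j₀ by omega)
      omega
  -- chaining the ordering
  have hchain : ∀ (b : ℕ) (hb : b < relaxLen p ρ 1) (a : ℕ) (ha : a < b),
      σ ⟨a, by omega⟩ + relax p ρ 1 ⟨a, by omega⟩ ≤ σ ⟨b, hb⟩ := by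
    intro b
    induction b with
    | zero => intro _ a ha; omega
    | succ b ih =>
      intro hb a ha
      have hstep := horders b hb
      simp only [Equiv.refl_apply] at hstep
      rcases Nat.lt_or_ge a b with h2 | h2
      · calc σ ⟨a, by omega⟩ + relax p ρ 1 ⟨a, by omega⟩
            ≤ σ ⟨b, by omega⟩ := ih (by omega) a h2
          _ ≤ σ ⟨b, by omega⟩ + relax p ρ 1 ⟨b, by omega⟩ := Nat.le_add_right _ _
          _ ≤ σ ⟨b + 1, hb⟩ := hstep
      · have : a = b := by omega
        subst this
        exact hstep
  refine ⟨σ, Ω, ⟨hvalid, ?_, ?_, ?_⟩, horders, rfl⟩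
  · intro j
    obtain ⟨m, hm1, hm2⟩ := hcont (j : ℕ) j.isLt
    exact le_trans hm2 (hbd' m)
  · intro j j' hne i ⟨h1, h2, h3, h4⟩
    rcases Nat.lt_trichotomy (j : ℕ) (j' : ℕ) with hlt | heq | hlt
    · have h5 := hchain (j' : ℕ) j'.isLt (j : ℕ) hlt
      simp only [Fin.eta] at h5
      omega
    · exact hne (Fin.ext heq)
    · have h5 := hchain (j : ℕ) j.isLt (j' : ℕ) hlt
      simp only [Fin.eta] at h5
      omega
  · intro j i hi1 hi2
    obtain ⟨m, hm1, hm2⟩ := hcont (j : ℕ) j.isLt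
    exact hproc' m i (le_trans hm1 hi1) (lt_of_lt_of_le hi2 hm2)


end TOU
end
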